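/- If w is a function on ℝ^n that belongs to the Morrey-Campanato class 𝔏^{α,p}(ℝ^n) with 1 ≤ p ≤ n/α, then the function W(x,t) := w(x), viewed as a function on ℝ^{n+1}, belongs to 𝔏^{α,p}(ℝ^{n+1}), with ‖W‖_{𝔏^{α,p}(ℝ^{n+1})} ≤ C ‖w‖_{𝔏^{α,p}(ℝ^n)}. -/

import Mathlib

open MeasureTheory ENNReal

noncomputable section

/-- A cube in `ℝⁿ` with center `c` and side length `r`. -/
def cube (n : ℕ) (c : EuclideanSpace ℝ (Fin n)) (r : ℝ) : Set (EuclideanSpace ℝ (Fin n)) :=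
  {x | ∀ i, |x i - c i| ≤ r / 2}

/-- The Morrey–Campanato norm `sup_Q |Q|^{α/n} (|Q|^{-1} ∫_Q |f|^p)^{1/p}`. -/
def morreyNorm (n : ℕ) (α p : ℝ) (f : EuclideanSpace ℝ (Fin n) → ℝ) : ℝ≥0∞ :=
  ⨆ (c : EuclideanSpace ℝ (Fin n)) (r : ℝ) (_ : 0 < r),
    ENNReal.ofReal (r ^ α) * (ENNReal.ofReal (r ^ (n : ℝ)))⁻¹ ^ (1 / p) *
      (∫⁻ x in cube n c r, ENNReal.ofReal (|f x| ^ p)) ^ (1 / p)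

/-! A cube of side `r` in `ℝ^{n+1}` is the product of a cube of side `r` in `ℝⁿ` with an interval
of length `r`. Since `W` does not depend on the last coordinate, its `p`-th power integral over the
cube is at most `r` times that of `w` over the base cube, while the volume of the cube is `r` times
larger; the two factors of `r` cancel, so the estimate holds with `C = 1`. -/

/- Tonelli's inequality `lintegral_prod_le` needs no measurability, which matters here since
the function `w` of the theorem is arbitrary. -/
theorem setLIntegral_prod_comp_snd_le {α β : Type*} [MeasurableSpace α] [MeasurableSpace β]
    (μ : Measure α) (ν : Measure β) [SFinite μ] [SFinite ν] (s : Set α) (t : Set β)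
    (h : β → ℝ≥0∞) :
    ∫⁻ z in s ×ˢ t, h z.2 ∂μ.prod ν ≤ μ s * ∫⁻ y in t, h y ∂ν := by
  rw [← Measure.prod_restrict]
  calc ∫⁻ z, h z.2 ∂(μ.restrict s).prod (ν.restrict t)
      ≤ ∫⁻ _, ∫⁻ y, h y ∂ν.restrict t ∂μ.restrict s := lintegral_prod_le _
    _ = μ s * ∫⁻ y in t, h y ∂ν := by
        rw [lintegral_const, Measure.restrict_apply_univ, mul_comm]

def insertLastMeasurableEquiv (n : ℕ) :
    (ℝ × (Fin n → ℝ)) ≃ᵐ EuclideanSpace ℝ (Fin (n + 1)) :=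
  (MeasurableEquiv.piFinSuccAbove (fun _ : Fin (n + 1) => ℝ) (Fin.last n)).symm.trans
    (MeasurableEquiv.toLp 2 (Fin (n + 1) → ℝ))

theorem measurePreserving_insertLastMeasurableEquiv (n : ℕ) :
    MeasurePreserving (insertLastMeasurableEquiv n) :=
  (PiLp.volume_preserving_toLp (Fin (n + 1))).comp
    (volume_preserving_piFinSuccAbove (fun _ : Fin (n + 1) => ℝ) (Fin.last n)).symm

@[simp]
theorem insertLastMeasurableEquiv_apply_last (n : ℕ) (t : ℝ) (y : Fin n → ℝ) :
    insertLastMeasurableEquiv n (t, y) (Fin.last n) = t :=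
  Fin.insertNth_apply_same (α := fun _ => ℝ) _ _ _

@[simp]
theorem insertLastMeasurableEquiv_apply_castSucc (n : ℕ) (t : ℝ) (y : Fin n → ℝ)
    (i : Fin n) :
    insertLastMeasurableEquiv n (t, y) i.castSucc = y i := by
  rw [← Fin.succAbove_last]
  exact Fin.insertNth_apply_succAbove (α := fun _ => ℝ) _ _ _ _

theorem insertLastMeasurableEquiv_preimage_cube (n : ℕ) (c : EuclideanSpace ℝ (Fin (n + 1)))
    (r : ℝ) :
    insertLastMeasurableEquiv n ⁻¹' cube (n + 1) c r =
      Metric.closedBall (c (Fin.last n)) (r / 2) ×ˢ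
        (WithLp.toLp 2 ⁻¹' cube n (WithLp.toLp 2 fun i => c i.castSucc) r) := by
  ext ⟨t, y⟩
  simp only [cube, Set.mem_preimage, Set.mem_ofPred_eq, Set.mem_prod, Metric.mem_closedBall,
    Real.dist_eq, Fin.forall_fin_succ', insertLastMeasurableEquiv_apply_last,
    insertLastMeasurableEquiv_apply_castSucc]
  exact and_comm

theorem lintegral_cube_succ_le (n : ℕ) (c : EuclideanSpace ℝ (Fin (n + 1))) (r : ℝ)
    (g : EuclideanSpace ℝ (Fin n) → ℝ≥0∞) :
    ∫⁻ x in cube (n + 1) c r, g (WithLp.toLp 2 fun i => x i.castSucc) ≤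
      ENNReal.ofReal r * ∫⁻ y in cube n (WithLp.toLp 2 fun i => c i.castSucc) r, g y := by
  have hE := measurePreserving_insertLastMeasurableEquiv n
  calc ∫⁻ x in cube (n + 1) c r, g (WithLp.toLp 2 fun i => x i.castSucc)
      = ∫⁻ z in Metric.closedBall (c (Fin.last n)) (r / 2) ×ˢ
          (WithLp.toLp 2 ⁻¹' cube n (WithLp.toLp 2 fun i => c i.castSucc) r),
            g (WithLp.toLp 2 z.2) := by
        rw [← insertLastMeasurableEquiv_preimage_cube,
          ← hE.setLIntegral_comp_preimage_emb (insertLastMeasurableEquiv n).measurableEmbedding]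
        exact lintegral_congr fun ⟨t, y⟩ => by
          simp only [insertLastMeasurableEquiv_apply_castSucc]
    _ ≤ volume (Metric.closedBall (c (Fin.last n)) (r / 2)) *
          ∫⁻ y in WithLp.toLp 2 ⁻¹' cube n (WithLp.toLp 2 fun i => c i.castSucc) r,
            g (WithLp.toLp 2 y) := by
        rw [Measure.volume_eq_prod]
        exact setLIntegral_prod_comp_snd_le _ _ _ _ _
    _ = ENNReal.ofReal r * ∫⁻ y in cube n (WithLp.toLp 2 fun i => c i.castSucc) r, g y := by
        rw [Real.volume_closedBall,
          (PiLp.volume_preserving_toLp (Fin n)).setLIntegral_comp_preimage_emb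
            (MeasurableEquiv.toLp 2 (Fin n → ℝ)).measurableEmbedding]
        ring_nf

theorem morrey_time_independent_general (n : ℕ) (α p : ℝ) (hp1 : 1 ≤ p) :
    ∃ C > (0:ℝ), ∀ w : EuclideanSpace ℝ (Fin n) → ℝ,
      morreyNorm (n + 1) α p
          (fun x : EuclideanSpace ℝ (Fin (n + 1)) => w (WithLp.toLp 2 (fun i : Fin n => x i.castSucc))) ≤
        ENNReal.ofReal C * morreyNorm n α p w := by
  refine ⟨1, one_pos, fun w => ?_⟩
  rw [ENNReal.ofReal_one, one_mul]
  refine iSup₂_le fun c r => iSup_le fun hr => ?_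
  have hq : 0 ≤ 1 / p := one_div_nonneg.2 (by linarith)
  set c' : EuclideanSpace ℝ (Fin n) := WithLp.toLp 2 fun i => c i.castSucc
  set J := ∫⁻ y in cube n c' r, ENNReal.ofReal (|w y| ^ p)
  have hvol : ENNReal.ofReal (r ^ ((n + 1 : ℕ) : ℝ)) =
      ENNReal.ofReal (r ^ (n : ℝ)) * ENNReal.ofReal r := by
    rw [← ENNReal.ofReal_mul (by positivity), Nat.cast_succ, Real.rpow_add_one hr.ne']
  have hcancel : (ENNReal.ofReal (r ^ (n : ℝ)) * ENNReal.ofReal r)⁻¹ * (ENNReal.ofReal r * J) =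
      (ENNReal.ofReal (r ^ (n : ℝ)))⁻¹ * J := by
    rw [ENNReal.mul_inv (.inr ofReal_ne_top) (.inr (by simpa using hr)), mul_assoc,
      ENNReal.inv_mul_cancel_left (by simpa using hr) ofReal_ne_top]
  calc _ ≤ ENNReal.ofReal (r ^ α) * (ENNReal.ofReal (r ^ ((n + 1 : ℕ) : ℝ)))⁻¹ ^ (1 / p) *
          (ENNReal.ofReal r * J) ^ (1 / p) := by
        gcongr
        exact lintegral_cube_succ_le n c r _
    _ = ENNReal.ofReal (r ^ α) * (ENNReal.ofReal (r ^ (n : ℝ)))⁻¹ ^ (1 / p) *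
          J ^ (1 / p) := by
        rw [hvol, mul_assoc, mul_assoc, ← mul_rpow_of_nonneg _ _ hq, hcancel,
          mul_rpow_of_nonneg _ _ hq]
    _ ≤ morreyNorm n α p w := le_iSup₂_of_le c' r (le_iSup_of_le hr le_rfl)

/-- If `w ∈ 𝔏^{α,p}(ℝⁿ)` then `W(x,t) := w(x)`, viewed on `ℝ^{n+1}`, belongs to
`𝔏^{α,p}(ℝ^{n+1})` with `‖W‖ ≤ C‖w‖`. -/
theorem morrey_time_independent (n : ℕ) (α p : ℝ) (hα : 0 < α) (hp1 : 1 ≤ p)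
    (hp2 : p ≤ n / α) :
    ∃ C > (0:ℝ), ∀ w : EuclideanSpace ℝ (Fin n) → ℝ,
      morreyNorm (n + 1) α p
          (fun x : EuclideanSpace ℝ (Fin (n + 1)) => w (WithLp.toLp 2 (fun i : Fin n => x i.castSucc))) ≤
        ENNReal.ofReal C * morreyNorm n α p w :=
  morrey_time_independent_general n α p hp1
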